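/- arXiv:2210.10404 — 3 statements merged into one kernel-verified Lean document; each statement's English description precedes it below -/
import Mathlib

section
/- Let x₁ be a T-periodic solution in (0,1) of the 1D RFM ẋ₁ = u₀(1 - x₁) - u₁ x₁ with continuous positive T-periodic rates, let e₁ = ū₀/(ū₀ + ū₁), and z₁ = x₁ - e₁. Then (1/T)∫₀ᵀ u₀ z₁ dt = (1/T)∫₀ᵀ (u₀ + u₁) z₁² dt ≥ 0, and consequently (1/T)∫₀ᵀ u₁ z₁ dt ≤ 0. -/
/-!
With `z = x₁ - e₁` and `s = u₀ + u₁` the equation reads `ż = (u₀ - e₁ s) - s z`, a linear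
equation whose forcing `u₀ - e₁ s` has zero mean by the choice of `e₁`. Integrating `ż` and
`z ż = (z² / 2)'` over a period, both of which vanish by periodicity, gives `∫ s z = 0` and then
`∫ u₀ z = ∫ s z² ≥ 0`; finally `∫ u₁ z = ∫ s z - ∫ u₀ z = -∫ s z²`.
-/

open MeasureTheory intervalIntegral

section PeriodicDerivative

variable {f f' : ℝ → ℝ} {a b : ℝ}

theorem integral_eq_zero_of_hasDerivAt_of_eq (hf : ∀ t, HasDerivAt f (f' t) t)
    (hf' : IntervalIntegrable f' volume a b) (hab : f a = f b) :
    ∫ t in a..b, f' t = 0 := by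
  rw [integral_eq_sub_of_hasDerivAt (fun t _ => hf t) hf', hab, sub_self]

theorem integral_mul_deriv_eq_zero_of_eq (hf : ∀ t, HasDerivAt f (f' t) t)
    (hf' : IntervalIntegrable f' volume a b) (hab : f a = f b) :
    ∫ t in a..b, f t * f' t = 0 := by
  have hfc : Continuous f := continuous_iff_continuousAt.2 fun t => (hf t).continuousAt
  have hsq : ∀ t, HasDerivAt (fun s => f s ^ 2 / 2) (f t * f' t) t := fun t =>
    (((hf t).fun_pow 2).div_const 2).congr_deriv (by push_cast; ring)
  exact integral_eq_zero_of_hasDerivAt_of_eq hsq (hf'.continuousOn_mul hfc.continuousOn)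
    (by rw [hab])

end PeriodicDerivative

section LinearODE

variable {s c z : ℝ → ℝ} {a b : ℝ}

theorem integral_mul_eq_integral_of_hasDerivAt_eq_sub_mul (hs : Continuous s)
    (hc : Continuous c) (hz : ∀ t, HasDerivAt z (c t - s t * z t) t) (hab : z a = z b) :
    ∫ t in a..b, s t * z t = ∫ t in a..b, c t := by
  have hzc : Continuous z := continuous_iff_continuousAt.2 fun t => (hz t).continuousAt
  have h := integral_eq_zero_of_hasDerivAt_of_eq hz
    ((hc.fun_sub (hs.fun_mul hzc)).intervalIntegrable a b) hab
  rw [integral_sub (hc.intervalIntegrable a b) ((hs.fun_mul hzc).intervalIntegrable a b)] at h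
  linarith

theorem integral_mul_eq_integral_mul_sq_of_hasDerivAt_eq_sub_mul (hs : Continuous s)
    (hc : Continuous c) (hz : ∀ t, HasDerivAt z (c t - s t * z t) t) (hab : z a = z b) :
    ∫ t in a..b, c t * z t = ∫ t in a..b, s t * z t ^ 2 := by
  have hzc : Continuous z := continuous_iff_continuousAt.2 fun t => (hz t).continuousAt
  have h := integral_mul_deriv_eq_zero_of_eq hz
    ((hc.fun_sub (hs.fun_mul hzc)).intervalIntegrable a b) hab
  have hsplit : ∀ t, z t * (c t - s t * z t) = c t * z t - s t * z t ^ 2 := fun t => by ring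
  simp only [hsplit] at h
  rw [integral_sub ((hc.fun_mul hzc).intervalIntegrable a b)
    ((hs.fun_mul (hzc.fun_pow 2)).intervalIntegrable a b)] at h
  linarith

end LinearODE

theorem rfm1_shifted_moments {u0 u1 x : ℝ → ℝ} {a b e : ℝ}
    (hu0 : Continuous u0) (hu1 : Continuous u1)
    (hx : ∀ t, HasDerivAt x (u0 t * (1 - x t) - u1 t * x t) t) (hab : x a = x b)
    (he : e * ((∫ t in a..b, u0 t) + ∫ t in a..b, u1 t) = ∫ t in a..b, u0 t) :
    ∫ t in a..b, u0 t * (x t - e) = ∫ t in a..b, (u0 t + u1 t) * (x t - e) ^ 2 ∧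
      ∫ t in a..b, u1 t * (x t - e) = -∫ t in a..b, (u0 t + u1 t) * (x t - e) ^ 2 := by
  have hxc : Continuous x := continuous_iff_continuousAt.2 fun t => (hx t).continuousAt
  have hs : Continuous fun t => u0 t + u1 t := by fun_prop
  have hc : Continuous fun t => u0 t - e * (u0 t + u1 t) := by fun_prop
  have hsz : Continuous fun t => (u0 t + u1 t) * (x t - e) := by fun_prop
  have hu0z : Continuous fun t => u0 t * (x t - e) := by fun_prop
  have hz : ∀ t, HasDerivAt (fun t => x t - e)
      ((u0 t - e * (u0 t + u1 t)) - (u0 t + u1 t) * (x t - e)) t := fun t =>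
    ((hx t).sub_const e).congr_deriv (by ring)
  have hab' : x a - e = x b - e := by rw [hab]
  have hsum_moment : ∫ t in a..b, (u0 t + u1 t) * (x t - e) = 0 := by
    rw [integral_mul_eq_integral_of_hasDerivAt_eq_sub_mul hs hc hz hab',
      integral_sub (hu0.intervalIntegrable a b) ((hs.intervalIntegrable a b).const_mul e),
      intervalIntegral.integral_const_mul,
      integral_add (hu0.intervalIntegrable a b) (hu1.intervalIntegrable a b), he, sub_self]
  have hu0_moment := integral_mul_eq_integral_mul_sq_of_hasDerivAt_eq_sub_mul hs hc hz hab'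
  have hcz : ∀ t, (u0 t - e * (u0 t + u1 t)) * (x t - e)
      = u0 t * (x t - e) - e * ((u0 t + u1 t) * (x t - e)) := fun t => by ring
  simp only [hcz] at hu0_moment
  rw [integral_sub (hu0z.intervalIntegrable a b) ((hsz.intervalIntegrable a b).const_mul e),
    intervalIntegral.integral_const_mul, hsum_moment, mul_zero, sub_zero] at hu0_moment
  refine ⟨hu0_moment, ?_⟩
  have hu1z : ∀ t, u1 t * (x t - e) = (u0 t + u1 t) * (x t - e) - u0 t * (x t - e) :=
    fun t => by ring
  simp only [hu1z]
  rw [integral_sub (hsz.intervalIntegrable a b) (hu0z.intervalIntegrable a b), hsum_moment, hu0_moment,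
    zero_sub]

theorem rfm1_moment_identities_general
    (T : ℝ) (hT : 0 < T) (u0 u1 x1 : ℝ → ℝ)
    (hu0c : Continuous u0) (hu1c : Continuous u1)
    (hu0p : ∀ t, 0 < u0 t) (hu1p : ∀ t, 0 < u1 t)
    (hx1d : Differentiable ℝ x1) (hx1per : ∀ t, x1 (t + T) = x1 t)
    (hode : ∀ t, deriv x1 t = u0 t * (1 - x1 t) - u1 t * x1 t) :
    let e1 : ℝ := (1/T * ∫ t in (0:ℝ)..T, u0 t)
        / ((1/T * ∫ t in (0:ℝ)..T, u0 t) + (1/T * ∫ t in (0:ℝ)..T, u1 t))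
    (1/T * ∫ t in (0:ℝ)..T, u0 t * (x1 t - e1))
        = 1/T * ∫ t in (0:ℝ)..T, (u0 t + u1 t) * (x1 t - e1)^2
    ∧ 0 ≤ 1/T * ∫ t in (0:ℝ)..T, u0 t * (x1 t - e1)
    ∧ 1/T * ∫ t in (0:ℝ)..T, u1 t * (x1 t - e1) ≤ 0 := by
  intro e1
  have hA : 0 < ∫ t in (0:ℝ)..T, u0 t :=
    intervalIntegral_pos_of_pos (hu0c.intervalIntegrable 0 T) hu0p hT
  have hB : 0 < ∫ t in (0:ℝ)..T, u1 t :=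
    intervalIntegral_pos_of_pos (hu1c.intervalIntegrable 0 T) hu1p hT
  have he1 : e1 * ((∫ t in (0:ℝ)..T, u0 t) + ∫ t in (0:ℝ)..T, u1 t)
      = ∫ t in (0:ℝ)..T, u0 t := by
    simp only [e1]
    rw [← mul_add, mul_div_mul_left _ _ (by positivity), div_mul_cancel₀ _ (by positivity)]
  have hx : ∀ t, HasDerivAt x1 (u0 t * (1 - x1 t) - u1 t * x1 t) t := fun t =>
    hode t ▸ (hx1d t).hasDerivAt
  obtain ⟨hu0z, hu1z⟩ := rfm1_shifted_moments hu0c hu1c hx (by simpa using (hx1per 0).symm) he1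
  have hsq : 0 ≤ ∫ t in (0:ℝ)..T, (u0 t + u1 t) * (x1 t - e1) ^ 2 :=
    integral_nonneg hT.le fun t _ => by have := hu0p t; have := hu1p t; positivity
  refine ⟨by rw [hu0z], by rw [hu0z]; positivity, ?_⟩
  rw [hu1z, mul_neg, neg_nonpos]
  positivity

theorem rfm1_moment_identities
    (T : ℝ) (hT : 0 < T) (u0 u1 x1 : ℝ → ℝ)
    (hu0c : Continuous u0) (hu1c : Continuous u1)
    (hu0p : ∀ t, 0 < u0 t) (hu1p : ∀ t, 0 < u1 t)
    (hu0per : ∀ t, u0 (t + T) = u0 t) (hu1per : ∀ t, u1 (t + T) = u1 t)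
    (hx1d : Differentiable ℝ x1) (hx1per : ∀ t, x1 (t + T) = x1 t)
    (hx1mem : ∀ t, x1 t ∈ Set.Ioo (0:ℝ) 1)
    (hode : ∀ t, deriv x1 t = u0 t * (1 - x1 t) - u1 t * x1 t) :
    let e1 : ℝ := (1/T * ∫ t in (0:ℝ)..T, u0 t)
        / ((1/T * ∫ t in (0:ℝ)..T, u0 t) + (1/T * ∫ t in (0:ℝ)..T, u1 t))
    (1/T * ∫ t in (0:ℝ)..T, u0 t * (x1 t - e1))
        = 1/T * ∫ t in (0:ℝ)..T, (u0 t + u1 t) * (x1 t - e1)^2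
    ∧ 0 ≤ 1/T * ∫ t in (0:ℝ)..T, u0 t * (x1 t - e1)
    ∧ 1/T * ∫ t in (0:ℝ)..T, u1 t * (x1 t - e1) ≤ 0 :=
  rfm1_moment_identities_general T hT u0 u1 x1 hu0c hu1c hu0p hu1p hx1d hx1per hode
end

section
/- Let n be odd, and consider the RFM with continuous positive T-periodic rates such that for every i ∈ {1,3,…,n-2} there exists αᵢ > 0 with uᵢ(t) = αᵢ u_{i+1}(t) for all t (i.e., the internal rates are proportional in pairs). Then there is no gain of entrainment: for the T-periodic solution x, (1/T)∫₀ᵀ u_n(t) x_n(t) dt ≤ ū_n e_n, where e is the equilibrium of the averaged system. -/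
open MeasureTheory intervalIntegral Real Filter

/-!
Along the periodic solution every site carries the same mean flux `F = ∫ uᵢ xᵢ (1 - xᵢ₊₁)`.
Site `i + 1` relaxes as `q' = A (1 - q) - B q` with `A = uᵢ xᵢ`, `B = uᵢ₊₁ (1 - xᵢ₊₂)`;
periodicity of `q`, `log q` and `log (1 - q)` turns Cauchy–Schwarz into
`1 / ∫A + 1 / ∫B ≤ 1 / F`. Put `cᵢ = ∫ uᵢ xᵢ / ∫ uᵢ` at even sites and
`cᵢ = F / ∫ uᵢ (1 - xᵢ₊₁)` at odd ones. The site inequality (even `i`) and the proportionality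
`uᵢ = αᵢ uᵢ₊₁` (odd `i`) give `F ≤ ∫ uᵢ · cᵢ (1 - cᵢ₊₁)`, with `c₀ = 1` and `cₙ₊₁ = 0` since `n`
is odd, whereas the averaged equilibrium has `∫ uᵢ · eᵢ (1 - eᵢ₊₁) = ∫ uₙ · eₙ` for every `i`.
If `F` exceeded `∫ uₙ · eₙ`, induction would give `cᵢ < eᵢ` up to `i = n + 1`, where both vanish.
-/

theorem sq_integral_le_integral_mul_mul_integral_div {f g : ℝ → ℝ} {a b : ℝ} (hab : a ≤ b)
    (hf : Continuous f) (hg : Continuous g) (hf0 : ∀ t, 0 ≤ f t) (hg0 : ∀ t, 0 < g t) :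
    (∫ t in a..b, f t) ^ 2 ≤ (∫ t in a..b, f t * g t) * ∫ t in a..b, f t / g t := by
  have hfg : Continuous fun t => f t / g t := hf.div hg fun t => (hg0 t).ne'
  have hquad : ∀ s : ℝ, 0 ≤ (∫ t in a..b, f t * g t) * (s * s)
      + (-2 * ∫ t in a..b, f t) * s + ∫ t in a..b, f t / g t := by
    intro s
    have hnonneg : 0 ≤ ∫ t in a..b, f t * (s * g t - 1) ^ 2 / g t :=
      integral_nonneg hab fun t _ => div_nonneg (mul_nonneg (hf0 t) (sq_nonneg _)) (hg0 t).le
    have hexpand : ∫ t in a..b, f t * (s * g t - 1) ^ 2 / g t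
        = ∫ t in a..b, (f t * g t * (s * s) + -2 * f t * s + f t / g t) :=
      integral_congr fun t _ => by field_simp [(hg0 t).ne']; ring
    rwa [hexpand, intervalIntegral.integral_add, intervalIntegral.integral_add,
      intervalIntegral.integral_mul_const, intervalIntegral.integral_mul_const,
      intervalIntegral.integral_const_mul] at hnonneg
    all_goals exact Continuous.intervalIntegrable (by fun_prop) _ _
  have hdiscrim := discrim_le_zero hquad
  rw [discrim] at hdiscrim
  linarith

section Relaxation

variable {A B q g : ℝ → ℝ} {T : ℝ}

theorem integral_comp_mul_inflow_eq_integral_comp_mul_outflow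
    (hA : Continuous A) (hB : Continuous B)
    (hq : ∀ t, HasDerivAt q (A t * (1 - q t) - B t * q t) t) (hper : q T = q 0)
    (hg : ContinuousOn g (q '' Set.uIcc 0 T)) :
    ∫ t in (0:ℝ)..T, g (q t) * (A t * (1 - q t)) = ∫ t in (0:ℝ)..T, g (q t) * (B t * q t) := by
  have hqc : Continuous q := continuous_iff_continuousAt.2 fun t => (hq t).continuousAt
  have hgq : ContinuousOn (fun t => g (q t)) (Set.uIcc 0 T) :=
    hg.comp hqc.continuousOn (Set.mapsTo_image _ _)
  have hchange := integral_comp_mul_deriv' (fun t _ => hq t) (by fun_prop) hg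
  rw [hper, integral_same] at hchange
  rw [← sub_eq_zero, ← intervalIntegral.integral_sub]
  · exact (integral_congr fun t _ => by simp only [Function.comp_apply]; ring).trans hchange
  · exact (hgq.mul (by fun_prop)).intervalIntegrable
  · exact (hgq.mul (by fun_prop)).intervalIntegrable

theorem integral_inflow_eq_integral_outflow (hA : Continuous A) (hB : Continuous B)
    (hq : ∀ t, HasDerivAt q (A t * (1 - q t) - B t * q t) t) (hper : q T = q 0) :
    ∫ t in (0:ℝ)..T, A t * (1 - q t) = ∫ t in (0:ℝ)..T, B t * q t := by
  simpa using integral_comp_mul_inflow_eq_integral_comp_mul_outflow (g := fun _ => 1)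
    hA hB hq hper continuousOn_const

theorem integral_inflow_div_eq_integral_rate (hA : Continuous A) (hB : Continuous B)
    (hq : ∀ t, HasDerivAt q (A t * (1 - q t) - B t * q t) t) (hper : q T = q 0)
    (hq0 : ∀ t, 0 < q t) :
    ∫ t in (0:ℝ)..T, A t * (1 - q t) / q t = ∫ t in (0:ℝ)..T, B t := by
  have hg : ContinuousOn (fun y : ℝ => y⁻¹) (q '' Set.uIcc 0 T) :=
    continuousOn_inv₀.mono (by rintro _ ⟨t, -, rfl⟩; exact (hq0 t).ne')
  convert integral_comp_mul_inflow_eq_integral_comp_mul_outflow hA hB hq hper hg using 1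
  · exact integral_congr fun t _ => by ring
  · exact integral_congr fun t _ => by field_simp [(hq0 t).ne']

theorem integral_outflow_div_eq_integral_rate (hA : Continuous A) (hB : Continuous B)
    (hq : ∀ t, HasDerivAt q (A t * (1 - q t) - B t * q t) t) (hper : q T = q 0)
    (hq1 : ∀ t, q t < 1) :
    ∫ t in (0:ℝ)..T, B t * q t / (1 - q t) = ∫ t in (0:ℝ)..T, A t := by
  have hne : ∀ t, 1 - q t ≠ 0 := fun t => (sub_pos.2 (hq1 t)).ne'
  have hg : ContinuousOn (fun y : ℝ => (1 - y)⁻¹) (q '' Set.uIcc 0 T) :=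
    ContinuousOn.inv₀ (by fun_prop) (by rintro _ ⟨t, -, rfl⟩; exact hne t)
  convert (integral_comp_mul_inflow_eq_integral_comp_mul_outflow hA hB hq hper hg).symm using 1
  · exact integral_congr fun t _ => by ring
  · exact integral_congr fun t _ => by field_simp [hne t]

theorem integral_inflow_mul_add_le (hT : 0 ≤ T) (hA : Continuous A) (hB : Continuous B)
    (hA0 : ∀ t, 0 ≤ A t) (hB0 : ∀ t, 0 ≤ B t)
    (hq : ∀ t, HasDerivAt q (A t * (1 - q t) - B t * q t) t) (hper : q T = q 0)
    (hq01 : ∀ t, q t ∈ Set.Ioo 0 1) :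
    (∫ t in (0:ℝ)..T, A t * (1 - q t)) * ((∫ t in (0:ℝ)..T, A t) + ∫ t in (0:ℝ)..T, B t)
      ≤ (∫ t in (0:ℝ)..T, A t) * ∫ t in (0:ℝ)..T, B t := by
  have hqc : Continuous q := continuous_iff_continuousAt.2 fun t => (hq t).continuousAt
  have hq0 : ∀ t, 0 < q t := fun t => (hq01 t).1
  have hq1 : ∀ t, 0 < 1 - q t := fun t => sub_pos.2 (hq01 t).2
  set F := ∫ t in (0:ℝ)..T, A t * (1 - q t)
  set X := ∫ t in (0:ℝ)..T, A t * (1 - q t) * q t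
  set Y := ∫ t in (0:ℝ)..T, A t * (1 - q t) * (1 - q t)
  have hsplit : X + Y = F := by
    rw [← intervalIntegral.integral_add]
    · exact integral_congr fun t _ => by ring
    all_goals exact Continuous.intervalIntegrable (by fun_prop) _ _
  have hY : Y = ∫ t in (0:ℝ)..T, B t * q t * (1 - q t) := by
    convert integral_comp_mul_inflow_eq_integral_comp_mul_outflow (g := fun y => 1 - y)
      hA hB hq hper (by fun_prop) using 1 <;> exact integral_congr fun t _ => by ring
  have hCS₁ : F ^ 2 ≤ X * ∫ t in (0:ℝ)..T, B t := by
    rw [← integral_inflow_div_eq_integral_rate hA hB hq hper hq0]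
    exact sq_integral_le_integral_mul_mul_integral_div hT (by fun_prop) hqc
      (fun t => mul_nonneg (hA0 t) (hq1 t).le) hq0
  have hCS₂ : F ^ 2 ≤ Y * ∫ t in (0:ℝ)..T, A t := by
    have hFB : F = ∫ t in (0:ℝ)..T, B t * q t :=
      integral_inflow_eq_integral_outflow hA hB hq hper
    rw [hFB, hY,
      ← integral_outflow_div_eq_integral_rate hA hB hq hper fun t => (hq01 t).2]
    exact sq_integral_le_integral_mul_mul_integral_div hT (by fun_prop) (by fun_prop)
      (fun t => mul_nonneg (hB0 t) (hq0 t).le) hq1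
  have hF : 0 ≤ F := integral_nonneg hT fun t _ => mul_nonneg (hA0 t) (hq1 t).le
  have hIA : 0 ≤ ∫ t in (0:ℝ)..T, A t := integral_nonneg hT fun t _ => hA0 t
  have hIB : 0 ≤ ∫ t in (0:ℝ)..T, B t := integral_nonneg hT fun t _ => hB0 t
  rcases hF.eq_or_lt with hF0 | hFpos
  · rw [← hF0, zero_mul]; positivity
  · refine le_of_mul_le_mul_left ?_ hFpos
    linear_combination mul_le_mul_of_nonneg_right hCS₁ hIA + mul_le_mul_of_nonneg_right hCS₂ hIB
      + ((∫ t in (0:ℝ)..T, A t) * ∫ t in (0:ℝ)..T, B t) * hsplit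

end Relaxation

theorem eq_apply_zero_of_forall_succ_eq {β : Type*} {f : ℕ → β} {n : ℕ}
    (h : ∀ i < n, f (i + 1) = f i) : ∀ i ≤ n, f i = f 0 := by
  intro i
  induction i with
  | zero => exact fun _ => rfl
  | succ k ih => exact fun hk => (h k hk).trans (ih (by omega))

theorem flux_le_of_profile_comparison {n : ℕ} {U c e : ℕ → ℝ} {F V : ℝ}
    (hU : ∀ i ≤ n, 0 < U i) (hc : ∀ i ≤ n, 0 < c i) (he : ∀ i ≤ n, e (i + 1) ≤ 1)
    (h0 : c 0 ≤ e 0) (htop : e (n + 1) ≤ c (n + 1))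
    (hcF : ∀ i ≤ n, F ≤ U i * c i * (1 - c (i + 1)))
    (heV : ∀ i ≤ n, U i * e i * (1 - e (i + 1)) = V) : F ≤ V := by
  by_contra! hVF
  have hstep : ∀ i ≤ n, c i ≤ e i → c (i + 1) < e (i + 1) := by
    intro i hi hce
    have hUc : 0 < U i * c i := mul_pos (hU i hi) (hc i hi)
    have hlt : U i * c i * (1 - e (i + 1)) < U i * c i * (1 - c (i + 1)) :=
      calc U i * c i * (1 - e (i + 1)) ≤ U i * e i * (1 - e (i + 1)) := by
            gcongr
            · linarith [he i hi]
            · exact (hU i hi).le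
        _ = V := heV i hi
        _ < F := hVF
        _ ≤ U i * c i * (1 - c (i + 1)) := hcF i hi
    linarith [lt_of_mul_lt_mul_left hlt hUc.le]
  have hlt : ∀ i ≤ n, c (i + 1) < e (i + 1) := by
    intro i
    induction i with
    | zero => exact fun h0n => hstep 0 h0n h0
    | succ k ih => exact fun hk => hstep (k + 1) hk (ih (by omega)).le
  exact (hlt n le_rfl).not_ge htop

namespace RFM

structure IsPeriodicSolution (n : ℕ) (T : ℝ) (u x : ℕ → ℝ → ℝ) : Prop where
  continuous_rate : ∀ i ≤ n, Continuous (u i)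
  rate_pos : ∀ i ≤ n, ∀ t, 0 < u i t
  density_zero : ∀ t, x 0 t = 1
  density_succ_n : ∀ t, x (n + 1) t = 0
  hasDerivAt : ∀ i, 1 ≤ i → i ≤ n → ∀ t, HasDerivAt (x i)
    (u (i - 1) t * x (i - 1) t * (1 - x i t) - u i t * x i t * (1 - x (i + 1) t)) t
  periodic : ∀ i, 1 ≤ i → i ≤ n → x i T = x i 0
  density_mem_Ioo : ∀ i, 1 ≤ i → i ≤ n → ∀ t, x i t ∈ Set.Ioo 0 1

noncomputable def flux (T : ℝ) (u x : ℕ → ℝ → ℝ) (i : ℕ) : ℝ :=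
  ∫ t in (0:ℝ)..T, u i t * x i t * (1 - x (i + 1) t)

noncomputable def comparisonProfile (T : ℝ) (u x : ℕ → ℝ → ℝ) (i : ℕ) : ℝ :=
  if Even i then (∫ t in (0:ℝ)..T, u i t * x i t) / ∫ t in (0:ℝ)..T, u i t
  else flux T u x 0 / ∫ t in (0:ℝ)..T, u i t * (1 - x (i + 1) t)

namespace IsPeriodicSolution

variable {n : ℕ} {T : ℝ} {u x : ℕ → ℝ → ℝ}

theorem continuous_density (h : IsPeriodicSolution n T u x) {i : ℕ} (hi : i ≤ n + 1) :
    Continuous (x i) := by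
  rcases Nat.eq_zero_or_pos i with rfl | hi0
  · rw [funext h.density_zero]; exact continuous_const
  rcases hi.lt_or_eq with hin | rfl
  · exact continuous_iff_continuousAt.2 fun t => (h.hasDerivAt i hi0 (by omega) t).continuousAt
  · rw [funext h.density_succ_n]; exact continuous_const

theorem density_pos (h : IsPeriodicSolution n T u x) {i : ℕ} (hi : i ≤ n) (t : ℝ) :
    0 < x i t := by
  rcases Nat.eq_zero_or_pos i with rfl | hi0
  · rw [h.density_zero]; exact one_pos
  · exact (h.density_mem_Ioo i hi0 hi t).1

theorem density_lt_one (h : IsPeriodicSolution n T u x) {i : ℕ} (hi0 : 1 ≤ i) (hi : i ≤ n + 1)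
    (t : ℝ) : x i t < 1 := by
  rcases hi.lt_or_eq with hin | rfl
  · exact (h.density_mem_Ioo i hi0 (by omega) t).2
  · rw [h.density_succ_n]; exact one_pos

theorem hasDerivAt_succ (h : IsPeriodicSolution n T u x) {i : ℕ} (hi : i < n) (t : ℝ) :
    HasDerivAt (x (i + 1)) (u i t * x i t * (1 - x (i + 1) t)
      - u (i + 1) t * (1 - x (i + 1 + 1) t) * x (i + 1) t) t := by
  convert h.hasDerivAt (i + 1) (by omega) hi t using 1
  simp only [Nat.add_sub_cancel]
  ring

theorem flux_eq (h : IsPeriodicSolution n T u x) {i : ℕ} (hi : i ≤ n) :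
    flux T u x i = flux T u x 0 := by
  refine eq_apply_zero_of_forall_succ_eq (fun i hi => ?_) i hi
  have hcons := integral_inflow_eq_integral_outflow
    (A := fun t => u i t * x i t) (B := fun t => u (i + 1) t * (1 - x (i + 1 + 1) t))
    ((h.continuous_rate i hi.le).mul (h.continuous_density (by omega)))
    ((h.continuous_rate (i + 1) hi).mul (continuous_const.sub (h.continuous_density (by omega))))
    (h.hasDerivAt_succ hi) (h.periodic (i + 1) (by omega) hi)
  exact (integral_congr fun t _ => by ring).trans hcons.symm

theorem flux_mul_add_le (h : IsPeriodicSolution n T u x) (hT : 0 ≤ T) {i : ℕ} (hi : i < n) :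
    flux T u x 0 * ((∫ t in (0:ℝ)..T, u i t * x i t)
        + ∫ t in (0:ℝ)..T, u (i + 1) t * (1 - x (i + 1 + 1) t))
      ≤ (∫ t in (0:ℝ)..T, u i t * x i t)
        * ∫ t in (0:ℝ)..T, u (i + 1) t * (1 - x (i + 1 + 1) t) := by
  rw [← h.flux_eq hi.le]
  exact integral_inflow_mul_add_le hT
    ((h.continuous_rate i hi.le).mul (h.continuous_density (by omega)))
    ((h.continuous_rate (i + 1) hi).mul (continuous_const.sub (h.continuous_density (by omega))))
    (fun t => (mul_pos (h.rate_pos i hi.le t) (h.density_pos hi.le t)).le)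
    (fun t => (mul_pos (h.rate_pos (i + 1) hi t)
      (sub_pos.2 (h.density_lt_one (by omega) (by omega) t))).le)
    (h.hasDerivAt_succ hi) (h.periodic (i + 1) (by omega) hi)
    (h.density_mem_Ioo (i + 1) (by omega) hi)

theorem integral_rate_pos (h : IsPeriodicSolution n T u x) (hT : 0 < T) {i : ℕ} (hi : i ≤ n) :
    0 < ∫ t in (0:ℝ)..T, u i t :=
  intervalIntegral_pos_of_pos ((h.continuous_rate i hi).intervalIntegrable _ _)
    (h.rate_pos i hi) hT

theorem flux_zero_pos (h : IsPeriodicSolution n T u x) (hT : 0 < T) : 0 < flux T u x 0 := by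
  have hu := h.continuous_rate 0 n.zero_le
  have hx₀ := h.continuous_density (i := 0) (by omega)
  have hx₁ := h.continuous_density (i := 1) (by omega)
  refine intervalIntegral_pos_of_pos (Continuous.intervalIntegrable (by fun_prop) _ _) ?_ hT
  exact fun t => mul_pos (mul_pos (h.rate_pos 0 n.zero_le t) (h.density_pos n.zero_le t))
    (sub_pos.2 (h.density_lt_one le_rfl (by omega) t))

theorem integral_rate_mul_density_pos (h : IsPeriodicSolution n T u x) (hT : 0 < T) {i : ℕ}
    (hi : i ≤ n) : 0 < ∫ t in (0:ℝ)..T, u i t * x i t :=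
  intervalIntegral_pos_of_pos
    (((h.continuous_rate i hi).mul (h.continuous_density (by omega))).intervalIntegrable _ _)
    (fun t => mul_pos (h.rate_pos i hi t) (h.density_pos hi t)) hT

theorem integral_rate_mul_one_sub_density_pos (h : IsPeriodicSolution n T u x) (hT : 0 < T)
    {i : ℕ} (hi : i ≤ n) : 0 < ∫ t in (0:ℝ)..T, u i t * (1 - x (i + 1) t) :=
  intervalIntegral_pos_of_pos
    (((h.continuous_rate i hi).mul
      (continuous_const.sub (h.continuous_density (by omega)))).intervalIntegrable _ _)
    (fun t => mul_pos (h.rate_pos i hi t) (sub_pos.2 (h.density_lt_one (by omega) (by omega) t)))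
    hT

theorem comparisonProfile_pos (h : IsPeriodicSolution n T u x) (hT : 0 < T) {i : ℕ}
    (hi : i ≤ n) : 0 < comparisonProfile T u x i := by
  unfold comparisonProfile
  split_ifs
  · exact div_pos (h.integral_rate_mul_density_pos hT hi) (h.integral_rate_pos hT hi)
  · exact div_pos (h.flux_zero_pos hT) (h.integral_rate_mul_one_sub_density_pos hT hi)

theorem comparisonProfile_zero (h : IsPeriodicSolution n T u x) (hT : 0 < T) :
    comparisonProfile T u x 0 = 1 := by
  simp only [comparisonProfile, Even.zero, if_true, h.density_zero, mul_one]
  exact div_self (h.integral_rate_pos hT n.zero_le).ne'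

theorem comparisonProfile_succ_n (h : IsPeriodicSolution n T u x) (hn : Odd n) :
    comparisonProfile T u x (n + 1) = 0 := by
  simp [comparisonProfile, hn.add_one, h.density_succ_n]

theorem integral_rate_mul_comparisonProfile_of_even (h : IsPeriodicSolution n T u x)
    (hT : 0 < T) {i : ℕ} (hi : i ≤ n) (he : Even i) :
    (∫ t in (0:ℝ)..T, u i t) * comparisonProfile T u x i
      = ∫ t in (0:ℝ)..T, u i t * x i t := by
  rw [comparisonProfile, if_pos he, mul_div_cancel₀ _ (h.integral_rate_pos hT hi).ne']

theorem integral_rate_mul_one_sub_comparisonProfile_succ_n (h : IsPeriodicSolution n T u x)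
    (hn : Odd n) :
    (∫ t in (0:ℝ)..T, u n t) * (1 - comparisonProfile T u x (n + 1))
      = ∫ t in (0:ℝ)..T, u n t * (1 - x (n + 1) t) := by
  simp [h.comparisonProfile_succ_n hn, h.density_succ_n]

theorem integral_rate_mul_one_sub_comparisonProfile_of_proportional
    (h : IsPeriodicSolution n T u x) (hT : 0 < T) {i : ℕ} (hi : i < n) (ho : Odd i) {α : ℝ}
    (hα : ∀ t, u i t = α * u (i + 1) t) :
    (∫ t in (0:ℝ)..T, u i t) * (1 - comparisonProfile T u x (i + 1))
      = ∫ t in (0:ℝ)..T, u i t * (1 - x (i + 1) t) := by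
  have hU : ∫ t in (0:ℝ)..T, u i t = α * ∫ t in (0:ℝ)..T, u (i + 1) t := by
    simp_rw [hα]; exact intervalIntegral.integral_const_mul _ _
  have hP : ∫ t in (0:ℝ)..T, u i t * (1 - x (i + 1) t)
      = α * ((∫ t in (0:ℝ)..T, u (i + 1) t)
          - ∫ t in (0:ℝ)..T, u (i + 1) t * x (i + 1) t) := by
    rw [← intervalIntegral.integral_sub, ← intervalIntegral.integral_const_mul]
    · exact integral_congr fun t _ => by simp only [hα]; ring
    · exact (h.continuous_rate (i + 1) hi).intervalIntegrable _ _
    · exact ((h.continuous_rate (i + 1) hi).mul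
        (h.continuous_density (by omega))).intervalIntegrable _ _
  have hU₁ := (h.integral_rate_pos hT hi).ne'
  rw [comparisonProfile, if_pos ho.add_one, hU, hP]
  field_simp

theorem flux_le_comparisonProfile (h : IsPeriodicSolution n T u x) (hT : 0 < T) (hn : Odd n)
    (hprop : ∀ i, Odd i → i < n → ∃ α : ℝ, ∀ t, u i t = α * u (i + 1) t)
    {i : ℕ} (hi : i ≤ n) :
    flux T u x 0 ≤ (∫ t in (0:ℝ)..T, u i t) * comparisonProfile T u x i
      * (1 - comparisonProfile T u x (i + 1)) := by
  rcases Nat.even_or_odd i with he | ho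
  · have hin : i < n := hi.lt_of_ne fun hin => Nat.not_even_iff_odd.2 hn (hin ▸ he)
    have hP := h.integral_rate_mul_one_sub_density_pos hT hin
    have hsite := h.flux_mul_add_le hT.le hin
    rw [h.integral_rate_mul_comparisonProfile_of_even hT hi he, comparisonProfile,
      if_neg (Nat.not_even_iff_odd.2 he.add_one), mul_one_sub, mul_div_assoc', le_sub_iff_add_le,
      add_div' _ _ _ hP.ne', div_le_iff₀ hP]
    linarith
  · have hsplit : (∫ t in (0:ℝ)..T, u i t) * (1 - comparisonProfile T u x (i + 1))
        = ∫ t in (0:ℝ)..T, u i t * (1 - x (i + 1) t) := by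
      rcases hi.lt_or_eq with hin | rfl
      · obtain ⟨α, hα⟩ := hprop i ho hin
        exact h.integral_rate_mul_one_sub_comparisonProfile_of_proportional hT hin ho hα
      · exact h.integral_rate_mul_one_sub_comparisonProfile_succ_n hn
    rw [mul_right_comm, hsplit, comparisonProfile, if_neg (Nat.not_even_iff_odd.2 ho),
      mul_div_cancel₀ _ (h.integral_rate_mul_one_sub_density_pos hT hi).ne']

end IsPeriodicSolution

theorem averaged_flux_eq {n : ℕ} {T : ℝ} {u : ℕ → ℝ → ℝ} {e : ℕ → ℝ} (hT : T ≠ 0)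
    (hetop : e (n + 1) = 0)
    (heq : ∀ i, 1 ≤ i → i ≤ n →
      (1/T * ∫ t in (0:ℝ)..T, u (i-1) t) * e (i-1) * (1 - e i)
        = (1/T * ∫ t in (0:ℝ)..T, u i t) * e i * (1 - e (i+1)))
    {i : ℕ} (hi : i ≤ n) :
    (∫ t in (0:ℝ)..T, u i t) * e i * (1 - e (i + 1)) = (∫ t in (0:ℝ)..T, u n t) * e n := by
  set g : ℕ → ℝ := fun i => (∫ t in (0:ℝ)..T, u i t) * e i * (1 - e (i + 1)) with hg
  have hsucc : ∀ i < n, g (i + 1) = g i := by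
    intro i hin
    have heqi := heq (i + 1) (by omega) hin
    simp only [Nat.add_sub_cancel] at heqi
    refine mul_left_cancel₀ (one_div_ne_zero hT) ?_
    linear_combination -heqi
  have hgn : g n = (∫ t in (0:ℝ)..T, u n t) * e n := by simp [hg, hetop]
  rw [← hgn, eq_apply_zero_of_forall_succ_eq hsucc n le_rfl]
  exact eq_apply_zero_of_forall_succ_eq hsucc i hi

end RFM

theorem rfm_no_goe_odd_proportional_pairs_general
    (n : ℕ) (T : ℝ) (hT : 0 < T)
    (u : ℕ → ℝ → ℝ) (x : ℕ → ℝ → ℝ) (e : ℕ → ℝ)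
    (hu_cont : ∀ i, i ≤ n → Continuous (u i))
    (hu_pos : ∀ i, i ≤ n → ∀ t, 0 < u i t)
    (hx0 : ∀ t, x 0 t = 1) (hxtop : ∀ t, x (n+1) t = 0)
    (hxdiff : ∀ i, 1 ≤ i → i ≤ n → Differentiable ℝ (x i))
    (hxper : ∀ i, 1 ≤ i → i ≤ n → ∀ t, x i (t + T) = x i t)
    (hxmem : ∀ i, 1 ≤ i → i ≤ n → ∀ t, x i t ∈ Set.Ioo (0:ℝ) 1)
    (hode : ∀ i, 1 ≤ i → i ≤ n → ∀ t,
      deriv (x i) t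
        = u (i-1) t * x (i-1) t * (1 - x i t) - u i t * x i t * (1 - x (i+1) t))
    (he0 : e 0 = 1) (hetop : e (n+1) = 0)
    (hemem : ∀ i, 1 ≤ i → i ≤ n → e i ∈ Set.Ioo (0:ℝ) 1)
    (heq : ∀ i, 1 ≤ i → i ≤ n →
      (1/T * ∫ t in (0:ℝ)..T, u (i-1) t) * e (i-1) * (1 - e i)
        = (1/T * ∫ t in (0:ℝ)..T, u i t) * e i * (1 - e (i+1)))
    (hodd : Odd n)
    (hprop : ∀ i, Odd i → i ≤ n - 2 →
      ∃ α : ℝ, 0 < α ∧ ∀ t, u i t = α * u (i+1) t) :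
    1/T * ∫ t in (0:ℝ)..T, u n t * x n t ≤ (1/T * ∫ t in (0:ℝ)..T, u n t) * e n := by
  have h : RFM.IsPeriodicSolution n T u x :=
    ⟨hu_cont, hu_pos, hx0, hxtop,
      fun i hi hin t => hode i hi hin t ▸ (hxdiff i hi hin t).hasDerivAt,
      fun i hi hin => by simpa using hxper i hi hin 0, hxmem⟩
  have hpairs : ∀ i, Odd i → i < n → ∃ α : ℝ, ∀ t, u i t = α * u (i + 1) t := by
    intro i hi hin
    obtain ⟨α, -, hα⟩ := hprop i hi (by obtain ⟨a, rfl⟩ := hi; obtain ⟨b, rfl⟩ := hodd; omega)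
    exact ⟨α, hα⟩
  have hout : ∫ t in (0:ℝ)..T, u n t * x n t = RFM.flux T u x 0 := by
    rw [← h.flux_eq le_rfl]
    simp [RFM.flux, hxtop]
  have he : ∀ i ≤ n, e (i + 1) ≤ 1 := fun i hi => by
    rcases hi.lt_or_eq with hin | rfl
    · exact (hemem (i + 1) (by omega) hin).2.le
    · rw [hetop]; exact zero_le_one
  rw [hout, mul_assoc]
  refine mul_le_mul_of_nonneg_left ?_ (by positivity)
  exact flux_le_of_profile_comparison (U := fun i => ∫ t in (0:ℝ)..T, u i t)
    (fun i => h.integral_rate_pos hT) (fun i => h.comparisonProfile_pos hT) he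
    (by rw [h.comparisonProfile_zero hT, he0]) (by rw [hetop, h.comparisonProfile_succ_n hodd])
    (fun i => h.flux_le_comparisonProfile hT hodd hpairs)
    (fun i => RFM.averaged_flux_eq hT.ne' hetop heq)

theorem rfm_no_goe_odd_proportional_pairs
    (n : ℕ) (hn : 1 ≤ n) (T : ℝ) (hT : 0 < T)
    (u : ℕ → ℝ → ℝ) (x : ℕ → ℝ → ℝ) (e : ℕ → ℝ)
    (hu_cont : ∀ i, i ≤ n → Continuous (u i))
    (hu_pos : ∀ i, i ≤ n → ∀ t, 0 < u i t)
    (hu_per : ∀ i, i ≤ n → ∀ t, u i (t + T) = u i t)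
    (hx0 : ∀ t, x 0 t = 1) (hxtop : ∀ t, x (n+1) t = 0)
    (hxdiff : ∀ i, 1 ≤ i → i ≤ n → Differentiable ℝ (x i))
    (hxper : ∀ i, 1 ≤ i → i ≤ n → ∀ t, x i (t + T) = x i t)
    (hxmem : ∀ i, 1 ≤ i → i ≤ n → ∀ t, x i t ∈ Set.Ioo (0:ℝ) 1)
    (hode : ∀ i, 1 ≤ i → i ≤ n → ∀ t,
      deriv (x i) t
        = u (i-1) t * x (i-1) t * (1 - x i t) - u i t * x i t * (1 - x (i+1) t))
    (he0 : e 0 = 1) (hetop : e (n+1) = 0)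
    (hemem : ∀ i, 1 ≤ i → i ≤ n → e i ∈ Set.Ioo (0:ℝ) 1)
    (heq : ∀ i, 1 ≤ i → i ≤ n →
      (1/T * ∫ t in (0:ℝ)..T, u (i-1) t) * e (i-1) * (1 - e i)
        = (1/T * ∫ t in (0:ℝ)..T, u i t) * e i * (1 - e (i+1)))
    (hodd : Odd n)
    (hprop : ∀ i, Odd i → i ≤ n - 2 →
      ∃ α : ℝ, 0 < α ∧ ∀ t, u i t = α * u (i+1) t) :
    1/T * ∫ t in (0:ℝ)..T, u n t * x n t ≤ (1/T * ∫ t in (0:ℝ)..T, u n t) * e n :=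
  rfm_no_goe_odd_proportional_pairs_general n T hT u x e hu_cont hu_pos hx0 hxtop hxdiff hxper hxmem
    hode he0 hetop hemem heq hodd hprop
end

section
/- Let n be even, and consider the RFM with continuous positive T-periodic rates such that for every i ∈ {1,3,…,n-1} there exists αᵢ > 0 with uᵢ(t) = αᵢ u_{i+1}(t) for all t. Then there is no gain of entrainment: R_P ≤ R_C. -/
/-!
Integrals below are over one period, so `R = ∫ uₙ xₙ = T R_P`. Put `Ūⱼ = ∫ uⱼ`, `Wⱼ = ∫ uⱼ xⱼ`
and `Sᵢ = ∫ uᵢ (1 - x_{i+1})`. Integrating `xᵢ'` shows that every flux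
`∫ u_{i-1} x_{i-1} (1 - xᵢ)` equals `R`; integrating `(log xᵢ)'` gives
`∫ u_{i-1} x_{i-1} (1 - xᵢ) / xᵢ = Sᵢ`. Together with the Cauchy–Schwarz inequality
`(∫ p)² ≤ ∫ p xᵢ · ∫ p / xᵢ` for `p = u_{i-1} x_{i-1}` this gives `R W_{i-1} ≤ (W_{i-1} - R) Sᵢ`.

When `uᵢ = αᵢ u_{i+1}`, `Sᵢ = Ūᵢ (1 - W_{i+1} / Ū_{i+1})` is expressed through averaged
quantities, while the averaged equilibrium has all fluxes `Ūⱼ eⱼ (1 - e_{j+1})` equal to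
`R_C T = Ūₙ eₙ`. If `R ≥ Ūₙ eₙ`, descending over the pairs `(i, i + 1)` with `i` odd yields
`R ≤ Wⱼ (1 - e_{j+1})` for every even `j`; at `j = 0` this reads `R ≤ Ū₀ (1 - e₁) = Ūₙ eₙ`.
-/

open MeasureTheory intervalIntegral Real Filter

theorem eq_of_forall_eq_succ {α : Type*} {f : ℕ → α} {a b : ℕ} (hab : a ≤ b)
    (h : ∀ i, a ≤ i → i < b → f i = f (i + 1)) : f a = f b := by
  induction b, hab using Nat.le_induction with
  | base => rfl
  | succ b hab ih =>
    exact (ih fun i hai hib => h i hai (hib.trans (Nat.lt_succ_self b))).trans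
      (h b hab (Nat.lt_succ_self b))

section PeriodicIntegrals

variable {a b : ℝ}

theorem integral_eq_integral_of_hasDerivAt_sub {y f g : ℝ → ℝ}
    (hy : ∀ t, HasDerivAt y (f t - g t) t) (hper : y a = y b)
    (hf : IntervalIntegrable f volume a b) (hg : IntervalIntegrable g volume a b) :
    ∫ t in a..b, f t = ∫ t in a..b, g t := by
  have h := integral_eq_sub_of_hasDerivAt (fun t _ => hy t) (hf.sub hg)
  rw [integral_sub hf hg, hper, sub_self] at h
  exact sub_eq_zero.mp h

theorem integral_div_eq_integral_div_of_hasDerivAt_sub {y f g : ℝ → ℝ}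
    (hy : ∀ t, HasDerivAt y (f t - g t) t) (hy_pos : ∀ t, 0 < y t) (hper : y a = y b)
    (hf : Continuous f) (hg : Continuous g) :
    ∫ t in a..b, f t / y t = ∫ t in a..b, g t / y t := by
  have hy_cont : Continuous y := continuous_iff_continuousAt.2 fun t => (hy t).continuousAt
  have hy_ne : ∀ t, y t ≠ 0 := fun t => (hy_pos t).ne'
  refine integral_eq_integral_of_hasDerivAt_sub (y := fun t => Real.log (y t)) (fun t => ?_)
    (by rw [hper]) ((hf.div hy_cont hy_ne).intervalIntegrable a b)
    ((hg.div hy_cont hy_ne).intervalIntegrable a b)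
  simpa only [sub_div] using (hy t).log (hy_ne t)

theorem sq_integral_le_integral_mul_mul_integral_div_s11 {p y : ℝ → ℝ} (hab : a < b)
    (hp : Continuous p) (hy : Continuous y) (hp_pos : ∀ t, 0 < p t) (hy_pos : ∀ t, 0 < y t) :
    (∫ t in a..b, p t) ^ 2 ≤ (∫ t in a..b, p t * y t) * ∫ t in a..b, p t / y t := by
  set A := ∫ t in a..b, p t * y t
  set B := ∫ t in a..b, p t
  set D := ∫ t in a..b, p t / y t
  have hA : 0 < A := intervalIntegral_pos_of_pos ((hp.mul hy).intervalIntegrable a b)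
    (fun t => mul_pos (hp_pos t) (hy_pos t)) hab
  have hexpand : ∀ t, p t * (A - B * y t) ^ 2 / y t
      = A ^ 2 * (p t / y t) - 2 * A * B * p t + B ^ 2 * (p t * y t) := fun t => by
    have := (hy_pos t).ne'
    field_simp
    ring
  have hnonneg : 0 ≤ ∫ t in a..b, p t * (A - B * y t) ^ 2 / y t :=
    integral_nonneg hab.le fun t _ => by have := hp_pos t; have := hy_pos t; positivity
  have hint : ∫ t in a..b, p t * (A - B * y t) ^ 2 / y t
      = A ^ 2 * D - 2 * A * B * B + B ^ 2 * A := by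
    have hp_int : IntervalIntegrable p volume a b := hp.intervalIntegrable a b
    have hpy_int : IntervalIntegrable (fun t => p t * y t) volume a b :=
      (hp.mul hy).intervalIntegrable a b
    have hpdy_int : IntervalIntegrable (fun t => p t / y t) volume a b :=
      (hp.div hy fun t => (hy_pos t).ne').intervalIntegrable a b
    simp_rw [hexpand]
    rw [intervalIntegral.integral_add ((hpdy_int.const_mul _).sub (hp_int.const_mul _))
        (hpy_int.const_mul _), intervalIntegral.integral_sub (hpdy_int.const_mul _)
        (hp_int.const_mul _)]
    simp only [intervalIntegral.integral_const_mul, A, B, D]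
  have : A * B ^ 2 ≤ A * (A * D) := by nlinarith
  exact le_of_mul_le_mul_left this hA

theorem flux_mul_integral_le_of_periodic {p q y : ℝ → ℝ} (hab : a < b)
    (hp : Continuous p) (hq : Continuous q) (hp_pos : ∀ t, 0 < p t)
    (hy : ∀ t, HasDerivAt y (p t * (1 - y t) - q t * y t) t) (hy_pos : ∀ t, 0 < y t)
    (hper : y a = y b) :
    (∫ t in a..b, p t * (1 - y t)) * (∫ t in a..b, p t)
      ≤ ((∫ t in a..b, p t) - ∫ t in a..b, p t * (1 - y t)) * ∫ t in a..b, q t := by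
  have hy_cont : Continuous y := continuous_iff_continuousAt.2 fun t => (hy t).continuousAt
  have hp_int : IntervalIntegrable p volume a b := hp.intervalIntegrable a b
  have hpy_int : IntervalIntegrable (fun t => p t * y t) volume a b :=
    (hp.mul hy_cont).intervalIntegrable a b
  have hpdy_int : IntervalIntegrable (fun t => p t / y t) volume a b :=
    (hp.div hy_cont fun t => (hy_pos t).ne').intervalIntegrable a b
  have hflux :
      ∫ t in a..b, p t * (1 - y t) = (∫ t in a..b, p t) - ∫ t in a..b, p t * y t := by
    rw [← intervalIntegral.integral_sub hp_int hpy_int]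
    simp only [mul_one_sub]
  have hlog : ∫ t in a..b, q t = (∫ t in a..b, p t / y t) - ∫ t in a..b, p t := by
    have h := integral_div_eq_integral_div_of_hasDerivAt_sub hy hy_pos hper
      (hp.mul (continuous_const.sub hy_cont)) (hq.mul hy_cont)
    rw [← intervalIntegral.integral_sub hpdy_int hp_int]
    refine .trans (integral_congr fun t _ => ?_) (h.symm.trans (integral_congr fun t _ => ?_))
    · field_simp [(hy_pos t).ne']
    · field_simp [(hy_pos t).ne']
  rw [hflux, hlog]
  nlinarith [sq_integral_le_integral_mul_mul_integral_div_s11 hab hp hy_cont hp_pos hy_pos]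

theorem integral_mul_one_sub_eq_of_eq_const_mul {f g y : ℝ → ℝ} {α : ℝ}
    (hfg : ∀ t, f t = α * g t) (hg : IntervalIntegrable g volume a b)
    (hgy : IntervalIntegrable (fun t => g t * y t) volume a b) (hg0 : ∫ t in a..b, g t ≠ 0) :
    ∫ t in a..b, f t * (1 - y t)
      = (∫ t in a..b, f t) * (1 - (∫ t in a..b, g t * y t) / ∫ t in a..b, g t) := by
  have h : ∫ t in a..b, g t * (1 - y t) = (∫ t in a..b, g t) - ∫ t in a..b, g t * y t := by
    rw [← intervalIntegral.integral_sub hg hgy]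
    simp only [mul_one_sub]
  simp only [hfg, mul_assoc, intervalIntegral.integral_const_mul, h]
  field_simp

end PeriodicIntegrals

theorem flux_eq_of_averaged_equilibrium {n : ℕ} {c : ℝ} {U e : ℕ → ℝ} (hc : c ≠ 0)
    (he_top : e (n + 1) = 0)
    (heq : ∀ i, 1 ≤ i → i ≤ n →
      c * U (i - 1) * e (i - 1) * (1 - e i) = c * U i * e i * (1 - e (i + 1)))
    {j : ℕ} (hj : j ≤ n) : U j * e j * (1 - e (j + 1)) = U n * e n := by
  have h := eq_of_forall_eq_succ (f := fun i => U i * e i * (1 - e (i + 1))) hj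
    fun i _ hi => by
      have := heq (i + 1) (by omega) hi
      simp only [Nat.add_sub_cancel] at this
      exact mul_left_cancel₀ hc (by simpa only [mul_assoc] using this)
  simpa [he_top] using h

theorem le_mul_one_sub_of_pair_step {R RC U₁ U₂ W₀ W₂ S e₁ e₂ e₃ : ℝ}
    (hRC : RC ≤ R) (hU₁ : 0 ≤ U₁) (hU₂ : 0 < U₂) (hW₀ : 0 ≤ W₀) (hS : 0 < S)
    (he₁ : 0 ≤ e₁) (he₃ : e₃ < 1)
    (hflux₁ : U₁ * e₁ * (1 - e₂) = RC) (hflux₂ : U₂ * e₂ * (1 - e₃) = RC)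
    (hS_eq : S = U₁ * (1 - W₂ / U₂))
    (hprev : R ≤ W₂ * (1 - e₃)) (hpair : R * W₀ ≤ (W₀ - R) * S) :
    R ≤ W₀ * (1 - e₁) := by
  have h₂ : U₂ * e₂ ≤ W₂ := le_of_mul_le_mul_right (by linarith) (sub_pos.2 he₃)
  have hS_le : S ≤ U₁ * (1 - e₂) := by
    rw [hS_eq]
    gcongr
    exact (le_div_iff₀ hU₂).2 (by linarith)
  have h₁ : e₁ * S ≤ R :=
    (mul_le_mul_of_nonneg_left hS_le he₁).trans (by linarith)
  refine le_of_mul_le_mul_right ?_ hS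
  nlinarith [mul_le_mul_of_nonneg_left h₁ hW₀]

theorem le_of_pair_inequalities {m : ℕ} {R RC : ℝ} {U W S e : ℕ → ℝ}
    (hU : ∀ j ≤ 2 * m, 0 < U j) (hW : ∀ j ≤ 2 * m, 0 ≤ W j) (hW₀ : W 0 = U 0)
    (hW_top : R ≤ W (2 * m)) (he₀ : e 0 = 1)
    (he_mem : ∀ j, 1 ≤ j → j ≤ 2 * m → e j ∈ Set.Ioo (0:ℝ) 1) (he_top : e (2 * m + 1) = 0)
    (hflux : ∀ j ≤ 2 * m, U j * e j * (1 - e (j + 1)) = RC)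
    (hS_pos : ∀ k < m, 0 < S (2 * k + 1))
    (hS : ∀ k < m, S (2 * k + 1) = U (2 * k + 1) * (1 - W (2 * k + 2) / U (2 * k + 2)))
    (hpair : ∀ k < m, R * W (2 * k) ≤ (W (2 * k) - R) * S (2 * k + 1)) :
    R ≤ RC := by
  -- The backward induction needs `RC ≤ R`; under it, it ends with `R ≤ RC`.
  rcases le_total R RC with h | hRC
  · exact h
  have he_lt : ∀ j, 1 ≤ j → j ≤ 2 * m + 1 → e j < 1 := fun j hj hjm => by
    rcases hjm.lt_or_eq with hjm | rfl
    exacts [(he_mem j hj (by omega)).2, he_top ▸ one_pos]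
  have hind : ∀ k ≤ m, R ≤ W (2 * k) * (1 - e (2 * k + 1)) := fun k hk => by
    refine Nat.decreasingInduction (fun k hk ih => ?_) (by simpa [he_top] using hW_top) hk
    exact le_mul_one_sub_of_pair_step hRC (hU _ (by omega)).le (hU _ (by omega))
      (hW _ (by omega)) (hS_pos k hk) (he_mem _ (by omega) (by omega)).1.le
      (he_lt _ (by omega) (by omega)) (hflux _ (by omega)) (hflux _ (by omega)) (hS k hk) ih
      (hpair k hk)
  simpa [hW₀, ← hflux 0 (Nat.zero_le _), he₀] using hind 0 (Nat.zero_le m)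

section RFM

variable {n : ℕ} {T : ℝ} {u x : ℕ → ℝ → ℝ}

theorem rfm_continuous (hx0 : ∀ t, x 0 t = 1) (hxtop : ∀ t, x (n + 1) t = 0)
    (hxdiff : ∀ i, 1 ≤ i → i ≤ n → Differentiable ℝ (x i)) :
    ∀ i ≤ n + 1, Continuous (x i) := fun i hi => by
  rcases Nat.eq_zero_or_pos i with rfl | hi0
  · exact (funext hx0 : x 0 = fun _ => 1) ▸ continuous_const
  rcases hi.lt_or_eq with hi | rfl
  · exact (hxdiff i hi0 (by omega)).continuous
  · exact (funext hxtop : x (n + 1) = fun _ => 0) ▸ continuous_const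

theorem rfm_integral_flux_eq (hu : ∀ i ≤ n, Continuous (u i))
    (hx : ∀ i ≤ n + 1, Continuous (x i)) (hxtop : ∀ t, x (n + 1) t = 0)
    (hxdiff : ∀ i, 1 ≤ i → i ≤ n → Differentiable ℝ (x i))
    (hxper : ∀ i, 1 ≤ i → i ≤ n → ∀ t, x i (t + T) = x i t)
    (hode : ∀ i, 1 ≤ i → i ≤ n → ∀ t,
      deriv (x i) t
        = u (i-1) t * x (i-1) t * (1 - x i t) - u i t * x i t * (1 - x (i+1) t))
    {i : ℕ} (hi : 1 ≤ i) (hin : i ≤ n + 1) :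
    ∫ t in (0:ℝ)..T, u (i - 1) t * x (i - 1) t * (1 - x i t)
      = ∫ t in (0:ℝ)..T, u n t * x n t := by
  have hflux : ∀ j, 1 ≤ j → j ≤ n →
      ∫ t in (0:ℝ)..T, u (j - 1) t * x (j - 1) t * (1 - x j t)
        = ∫ t in (0:ℝ)..T, u j t * x j t * (1 - x (j + 1) t) := fun j hj hjn =>
    integral_eq_integral_of_hasDerivAt_sub
      (fun t => hode j hj hjn t ▸ (hxdiff j hj hjn t).hasDerivAt)
      (by simpa using (hxper j hj hjn 0).symm)
      ((((hu _ (by omega)).mul (hx _ (by omega))).mul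
        (continuous_const.sub (hx _ (by omega)))).intervalIntegrable 0 T)
      ((((hu _ hjn).mul (hx _ (by omega))).mul
        (continuous_const.sub (hx _ (by omega)))).intervalIntegrable 0 T)
  have h := eq_of_forall_eq_succ
    (f := fun j => ∫ t in (0:ℝ)..T, u (j - 1) t * x (j - 1) t * (1 - x j t)) hin
    fun j hj hjn => by simpa using hflux j (hi.trans hj) (by omega)
  simpa [hxtop] using h

theorem rfm_flux_mul_le (hT : 0 < T) (hu : ∀ i ≤ n, Continuous (u i))
    (hu_pos : ∀ i ≤ n, ∀ t, 0 < u i t)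
    (hx : ∀ i ≤ n + 1, Continuous (x i)) (hx_pos : ∀ i ≤ n, ∀ t, 0 < x i t)
    (hxtop : ∀ t, x (n + 1) t = 0)
    (hxdiff : ∀ i, 1 ≤ i → i ≤ n → Differentiable ℝ (x i))
    (hxper : ∀ i, 1 ≤ i → i ≤ n → ∀ t, x i (t + T) = x i t)
    (hode : ∀ i, 1 ≤ i → i ≤ n → ∀ t,
      deriv (x i) t
        = u (i-1) t * x (i-1) t * (1 - x i t) - u i t * x i t * (1 - x (i+1) t))
    {i : ℕ} (hi : 1 ≤ i) (hin : i ≤ n) :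
    (∫ t in (0:ℝ)..T, u n t * x n t) * (∫ t in (0:ℝ)..T, u (i - 1) t * x (i - 1) t)
      ≤ ((∫ t in (0:ℝ)..T, u (i - 1) t * x (i - 1) t) - ∫ t in (0:ℝ)..T, u n t * x n t)
        * ∫ t in (0:ℝ)..T, u i t * (1 - x (i + 1) t) := by
  rw [← rfm_integral_flux_eq hu hx hxtop hxdiff hxper hode hi (by omega)]
  refine flux_mul_integral_le_of_periodic hT ((hu _ (by omega)).mul (hx _ (by omega)))
    ((hu i hin).mul (continuous_const.sub (hx _ (by omega))))
    (fun t => mul_pos (hu_pos _ (by omega) t) (hx_pos _ (by omega) t)) (fun t => ?_)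
    (hx_pos i hin) (by simpa using (hxper i hi hin 0).symm)
  exact (hode i hi hin t ▸ (hxdiff i hi hin t).hasDerivAt).congr_deriv (by ring)

end RFM

theorem rfm_no_goe_even_oddpairs_general
    (n : ℕ) (T : ℝ) (hT : 0 < T)
    (u : ℕ → ℝ → ℝ) (x : ℕ → ℝ → ℝ) (e : ℕ → ℝ)
    (hu_cont : ∀ i, i ≤ n → Continuous (u i))
    (hu_pos : ∀ i, i ≤ n → ∀ t, 0 < u i t)
    (hx0 : ∀ t, x 0 t = 1) (hxtop : ∀ t, x (n+1) t = 0)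
    (hxdiff : ∀ i, 1 ≤ i → i ≤ n → Differentiable ℝ (x i))
    (hxper : ∀ i, 1 ≤ i → i ≤ n → ∀ t, x i (t + T) = x i t)
    (hxmem : ∀ i, 1 ≤ i → i ≤ n → ∀ t, x i t ∈ Set.Ioo (0:ℝ) 1)
    (hode : ∀ i, 1 ≤ i → i ≤ n → ∀ t,
      deriv (x i) t
        = u (i-1) t * x (i-1) t * (1 - x i t) - u i t * x i t * (1 - x (i+1) t))
    (he0 : e 0 = 1) (hetop : e (n+1) = 0)
    (hemem : ∀ i, 1 ≤ i → i ≤ n → e i ∈ Set.Ioo (0:ℝ) 1)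
    (heq : ∀ i, 1 ≤ i → i ≤ n →
      (1/T * ∫ t in (0:ℝ)..T, u (i-1) t) * e (i-1) * (1 - e i)
        = (1/T * ∫ t in (0:ℝ)..T, u i t) * e i * (1 - e (i+1)))
    (heven : Even n)
    (hprop : ∀ i, Odd i → i ≤ n - 1 →
      ∃ α : ℝ, 0 < α ∧ ∀ t, u i t = α * u (i+1) t) :
    1/T * ∫ t in (0:ℝ)..T, u n t * x n t ≤ (1/T * ∫ t in (0:ℝ)..T, u n t) * e n := by
  obtain ⟨m, rfl⟩ := heven.two_dvd
  have hx := rfm_continuous hx0 hxtop hxdiff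
  have hx_pos : ∀ i ≤ 2 * m, ∀ t, 0 < x i t := fun i hi t => by
    rcases Nat.eq_zero_or_pos i with rfl | hi0
    exacts [hx0 t ▸ one_pos, (hxmem i hi0 hi t).1]
  have hint_pos : ∀ {f : ℝ → ℝ}, Continuous f → (∀ t, 0 < f t) → 0 < ∫ t in (0:ℝ)..T, f t :=
    fun hf hpos => intervalIntegral_pos_of_pos (hf.intervalIntegrable 0 T) hpos hT
  rw [mul_assoc]
  refine mul_le_mul_of_nonneg_left ?_ (by positivity)
  refine le_of_pair_inequalities (m := m) (e := e) (U := fun j => ∫ t in (0:ℝ)..T, u j t)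
    (W := fun j => ∫ t in (0:ℝ)..T, u j t * x j t)
    (S := fun j => ∫ t in (0:ℝ)..T, u j t * (1 - x (j + 1) t))
    (fun j hj => hint_pos (hu_cont j hj) (hu_pos j hj))
    (fun j hj => (hint_pos ((hu_cont j hj).mul (hx j (by omega)))
      fun t => mul_pos (hu_pos j hj t) (hx_pos j hj t)).le)
    (by simp [hx0]) le_rfl he0 hemem hetop
    (fun j hj => flux_eq_of_averaged_equilibrium (U := fun j => ∫ t in (0:ℝ)..T, u j t)
      (one_div_ne_zero hT.ne') hetop heq hj)
    (fun k hk => hint_pos ((hu_cont _ (by omega)).mul (continuous_const.sub (hx _ (by omega))))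
      fun t => mul_pos (hu_pos _ (by omega) t) (sub_pos.2 (hxmem _ (by omega) (by omega) t).2))
    (fun k hk => ?_) (fun k hk => ?_)
  · obtain ⟨α, -, hα⟩ := hprop (2 * k + 1) (odd_two_mul_add_one k) (by omega)
    exact integral_mul_one_sub_eq_of_eq_const_mul hα
      ((hu_cont _ (by omega)).intervalIntegrable 0 T)
      (((hu_cont _ (by omega)).mul (hx _ (by omega))).intervalIntegrable 0 T)
      (hint_pos (hu_cont _ (by omega)) (hu_pos _ (by omega))).ne'
  · simpa using rfm_flux_mul_le (i := 2 * k + 1) hT hu_cont hu_pos hx hx_pos hxtop hxdiff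
      hxper hode (by omega) (by omega)

theorem rfm_no_goe_even_oddpairs
    (n : ℕ) (hn : 1 ≤ n) (T : ℝ) (hT : 0 < T)
    (u : ℕ → ℝ → ℝ) (x : ℕ → ℝ → ℝ) (e : ℕ → ℝ)
    (hu_cont : ∀ i, i ≤ n → Continuous (u i))
    (hu_pos : ∀ i, i ≤ n → ∀ t, 0 < u i t)
    (hu_per : ∀ i, i ≤ n → ∀ t, u i (t + T) = u i t)
    (hx0 : ∀ t, x 0 t = 1) (hxtop : ∀ t, x (n+1) t = 0)
    (hxdiff : ∀ i, 1 ≤ i → i ≤ n → Differentiable ℝ (x i))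
    (hxper : ∀ i, 1 ≤ i → i ≤ n → ∀ t, x i (t + T) = x i t)
    (hxmem : ∀ i, 1 ≤ i → i ≤ n → ∀ t, x i t ∈ Set.Ioo (0:ℝ) 1)
    (hode : ∀ i, 1 ≤ i → i ≤ n → ∀ t,
      deriv (x i) t
        = u (i-1) t * x (i-1) t * (1 - x i t) - u i t * x i t * (1 - x (i+1) t))
    (he0 : e 0 = 1) (hetop : e (n+1) = 0)
    (hemem : ∀ i, 1 ≤ i → i ≤ n → e i ∈ Set.Ioo (0:ℝ) 1)
    (heq : ∀ i, 1 ≤ i → i ≤ n →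
      (1/T * ∫ t in (0:ℝ)..T, u (i-1) t) * e (i-1) * (1 - e i)
        = (1/T * ∫ t in (0:ℝ)..T, u i t) * e i * (1 - e (i+1)))
    (heven : Even n)
    (hprop : ∀ i, Odd i → i ≤ n - 1 →
      ∃ α : ℝ, 0 < α ∧ ∀ t, u i t = α * u (i+1) t) :
    1/T * ∫ t in (0:ℝ)..T, u n t * x n t ≤ (1/T * ∫ t in (0:ℝ)..T, u n t) * e n :=
  rfm_no_goe_even_oddpairs_general n T hT u x e hu_cont hu_pos hx0 hxtop hxdiff hxper hxmem hode he0
    hetop hemem heq heven hprop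
end
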